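/- For a proper enhancement e on (V, b), the Gauss sum can be written γ(V_e) = √2^{m+n} · exp(πi·β/4) for a unique β ∈ ℤ/8 (the Brown invariant), where m = dim V and n = dim V^⊥. Equivalently: (γ(V_e))⁸ = 2^{4(m+n)}, i.e. γ(V_e)/√2^{m+n} is an 8th root of unity. -/

import Mathlib

/-!
Fix a characteristic element `c`, i.e. `b x x = b x c` for all `x`; it exists because over
`ZMod 2` the diagonal `x ↦ b x x` of a symmetric form is linear and vanishes on the radical.
Squaring the Gauss sum and substituting `y = x + s` gives
`γ² = ∑ s, i ^ e s * ∑ x, (-1) ^ b (c + s) x`. The inner character sum is `|V|` if `c + s`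
lies in the radical and `0` otherwise, and properness makes `e` constant on `c + V^⊥`, so
`γ² = i ^ e c * 2 ^ (m + n)`. The fourth power removes the factor `i ^ e c`.
-/

/-- The nontrivial homomorphism `ZMod 2 → ZMod 4`, sending `1` to `2`. -/
def twice (a : ZMod 2) : ZMod 4 := 2 * a.val

open Complex

lemma I_pow_val_add (a c : ZMod 4) : I ^ (a + c).val = I ^ a.val * I ^ c.val :=
  AddChar.map_add_eq_mul (AddChar.zmodChar 4 I_pow_four) a c

lemma twice_zero : twice 0 = 0 := rfl

lemma twice_add : ∀ s t : ZMod 2, twice (s + t) = twice s + twice t := by decide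

lemma twice_add_self : ∀ t : ZMod 2, twice t + twice t = 0 := by decide

lemma I_pow_val_twice_one : I ^ (twice 1).val = -1 := by
  rw [show (twice 1).val = 2 from rfl, I_sq]

section ZModTwoModule

variable {V : Type*} [AddCommGroup V] [Module (ZMod 2) V]

lemma ZModModule.add_self_eq_zero (x : V) : x + x = 0 := by
  rw [← two_nsmul]
  exact ZModModule.char_nsmul_eq_zero 2 x

lemma natCard_eq_two_pow_finrank [Finite V] : Nat.card V = 2 ^ Module.finrank (ZMod 2) V := by
  have := Fintype.ofFinite V
  rw [Nat.card_eq_fintype_card, Module.card_eq_pow_finrank (K := ZMod 2), ZMod.card]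

lemma sum_I_pow_twice [Fintype V] (L : V →ₗ[ZMod 2] ZMod 2) [Decidable (L = 0)] :
    ∑ x, I ^ (twice (L x)).val = if L = 0 then (Nat.card V : ℂ) else 0 := by
  split_ifs with hL
  · simp [hL, twice_zero]
  obtain ⟨x₀, hx₀⟩ : ∃ x₀, L x₀ ≠ 0 := by
    by_contra! h
    exact hL (LinearMap.ext h)
  have hx₁ : L x₀ = 1 := by
    generalize L x₀ = t at hx₀
    revert t; decide
  refine eq_zero_of_mul_eq_self_left (b := I ^ (twice (L x₀)).val) ?_ ?_
  · rw [hx₁, I_pow_val_twice_one]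
    norm_num
  rw [Finset.mul_sum]
  exact Fintype.sum_equiv (Equiv.addLeft x₀) _ _ fun x => by
    simp only [Equiv.coe_addLeft, map_add, twice_add, I_pow_val_add]

end ZModTwoModule

lemma LinearMap.exists_eq_apply_right_of_ker_le {K V : Type*} [Field K] [AddCommGroup V]
    [Module K V] [FiniteDimensional K V] (b : V →ₗ[K] V →ₗ[K] K) {q : Module.Dual K V}
    (hq : LinearMap.ker b ≤ LinearMap.ker q) : ∃ c, ∀ x, q x = b x c := by
  obtain ⟨φ, rfl⟩ : q ∈ LinearMap.range b.dualMap := by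
    rw [LinearMap.range_dualMap_eq_dualAnnihilator_ker, Submodule.mem_dualAnnihilator]
    exact fun w hw => hq hw
  obtain ⟨c, rfl⟩ := (Module.evalEquiv K V).surjective φ
  exact ⟨c, fun x => rfl⟩

lemma exists_apply_self_eq_apply {V : Type*} [AddCommGroup V] [Module (ZMod 2) V]
    [FiniteDimensional (ZMod 2) V] (b : V →ₗ[ZMod 2] V →ₗ[ZMod 2] ZMod 2)
    (hsymm : ∀ x y, b x y = b y x) : ∃ c, ∀ x, b x x = b x c := by
  let diag : Module.Dual (ZMod 2) V :=
    { toFun := fun x => b x x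
      map_add' := fun x y => by
        simp only [map_add, LinearMap.add_apply, hsymm y x]
        linear_combination CharTwo.add_self_eq_zero (b x y)
      map_smul' := fun r x => by
        simp only [map_smul, LinearMap.smul_apply, smul_eq_mul, RingHom.id_apply, ← mul_assoc]
        congr 1
        revert r; decide }
  exact b.exists_eq_apply_right_of_ker_le (q := diag) fun z hz => by
    simp [diag, LinearMap.mem_ker.mp hz]

def IsEnhancement {V : Type*} [AddCommGroup V] [Module (ZMod 2) V]
    (b : V →ₗ[ZMod 2] V →ₗ[ZMod 2] ZMod 2) (e : V → ZMod 4) : Prop :=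
  ∀ x y, e (x + y) = e x + e y + twice (b x y)

namespace IsEnhancement

variable {V : Type*} [AddCommGroup V] [Module (ZMod 2) V]
  {b : V →ₗ[ZMod 2] V →ₗ[ZMod 2] ZMod 2} {e : V → ZMod 4}

lemma map_zero (he : IsEnhancement b e) : e 0 = 0 := by
  have h := he 0 0
  rw [add_zero, LinearMap.map_zero₂, twice_zero, add_zero] at h
  linear_combination -h

lemma add_self (he : IsEnhancement b e) (x : V) : e x + e x = twice (b x x) := by
  have h := he x x
  rw [ZModModule.add_self_eq_zero, he.map_zero] at h
  linear_combination -h - twice_add_self (b x x)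

lemma add_map_add_eq (he : IsEnhancement b e) (hsymm : ∀ x y, b x y = b y x) {c : V}
    (hc : ∀ x, b x x = b x c) (x s : V) : e x + e (x + s) = e s + twice (b (c + s) x) := by
  rw [he x s, map_add, LinearMap.add_apply, twice_add, hsymm c, hsymm s, ← hc, ← he.add_self]
  ring

lemma map_add_of_mem_ker (he : IsEnhancement b e) (hproper : ∀ z, (∀ y, b z y = 0) → e z = 0)
    (c : V) {z : V} (hz : z ∈ LinearMap.ker b) : e (c + z) = e c := by
  rw [LinearMap.mem_ker] at hz
  rw [add_comm, he, hz, hproper z fun y => by rw [hz]; rfl, LinearMap.zero_apply, twice_zero,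
    zero_add, add_zero]

lemma sum_sq [Fintype V] (he : IsEnhancement b e) (hsymm : ∀ x y, b x y = b y x)
    (hproper : ∀ z, (∀ y, b z y = 0) → e z = 0) {c : V} (hc : ∀ x, b x x = b x c) :
    (∑ x, I ^ (e x).val) ^ 2
      = I ^ (e c).val * (Nat.card V * Nat.card (LinearMap.ker b)) := by
  classical
  calc (∑ x, I ^ (e x).val) ^ 2
      = ∑ x, ∑ s, I ^ (e x + e (x + s)).val := by
        rw [sq, Finset.sum_mul_sum]
        refine Fintype.sum_congr _ _ fun x => ?_
        simp only [I_pow_val_add]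
        exact (Fintype.sum_equiv (Equiv.addLeft x) _ _ fun s => rfl).symm
    _ = ∑ s, I ^ (e s).val * ∑ x, I ^ (twice (b (c + s) x)).val := by
        rw [Finset.sum_comm]
        simp only [he.add_map_add_eq hsymm hc, I_pow_val_add, Finset.mul_sum]
    _ = ∑ z, if z ∈ LinearMap.ker b then I ^ (e c).val * Nat.card V else 0 := by
        refine Fintype.sum_equiv (Equiv.addLeft c) _ _ fun s => ?_
        rw [sum_I_pow_twice, Equiv.coe_addLeft, LinearMap.mem_ker]
        split_ifs with hs
        · rw [← he.map_add_of_mem_ker hproper c hs, ← add_assoc,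
            ZModModule.add_self_eq_zero, zero_add]
        · rw [mul_zero]
    _ = I ^ (e c).val * (Nat.card V * Nat.card (LinearMap.ker b)) := by
        rw [Finset.sum_ite, Finset.sum_const, Finset.sum_const_zero, add_zero, nsmul_eq_mul,
          ← Fintype.card_subtype, ← Nat.card_eq_fintype_card]
        ring

end IsEnhancement

open Complex in
theorem gauss_sum_eighth_power_general (V : Type*) [AddCommGroup V] [Module (ZMod 2) V]
    [Fintype V]
    (b : V →ₗ[ZMod 2] V →ₗ[ZMod 2] ZMod 2) (hsymm : ∀ x y, b x y = b y x)
    (e : V → ZMod 4)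
    (he : ∀ x y, e (x + y) = e x + e y + twice (b x y))
    (hproper : ∀ z : V, (∀ y, b z y = 0) → e z = 0) :
    (∑ x : V, I ^ (e x).val) ^ 8
      = 2 ^ (4 * (Module.finrank (ZMod 2) V
          + Module.finrank (ZMod 2) (LinearMap.ker b))) := by
  obtain ⟨c, hc⟩ := exists_apply_self_eq_apply b hsymm
  have hI : (I ^ (e c).val) ^ 4 = 1 := by rw [pow_right_comm, I_pow_four, one_pow]
  calc (∑ x : V, I ^ (e x).val) ^ 8
      = ((∑ x : V, I ^ (e x).val) ^ 2) ^ 4 := by ring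
    _ = (Nat.card V * Nat.card (LinearMap.ker b) : ℂ) ^ 4 := by
        rw [IsEnhancement.sum_sq he hsymm hproper hc, mul_pow, hI, one_mul]
    _ = 2 ^ (4 * (Module.finrank (ZMod 2) V + Module.finrank (ZMod 2) (LinearMap.ker b))) := by
        rw [natCard_eq_two_pow_finrank, natCard_eq_two_pow_finrank]
        push_cast
        ring

open Complex in
theorem gauss_sum_eighth_power (V : Type*) [AddCommGroup V] [Module (ZMod 2) V]
    [FiniteDimensional (ZMod 2) V] [Fintype V]
    (b : V →ₗ[ZMod 2] V →ₗ[ZMod 2] ZMod 2) (hsymm : ∀ x y, b x y = b y x)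
    (e : V → ZMod 4)
    (he : ∀ x y, e (x + y) = e x + e y + twice (b x y))
    (hproper : ∀ z : V, (∀ y, b z y = 0) → e z = 0) :
    (∑ x : V, I ^ (e x).val) ^ 8
      = 2 ^ (4 * (Module.finrank (ZMod 2) V
          + Module.finrank (ZMod 2) (LinearMap.ker b))) :=
  gauss_sum_eighth_power_general V b hsymm e he hproper
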